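/- If F = F(v, t, t_1, t_2, ...) is a v-invariant of the discrete hyperbolic equation t_{uv} = f(t, t_u, t_v), i.e. \bar{D}F = F where \bar{D} is the shift in v, then F does not depend on any of the variables \bar{t}_j = \bar{D}^j t for j ≥ 1. -/

import Mathlib

/-!
Upward evolution of `t_{uv} = f(t, t_u, t_v)` is deterministic: the row `(t_{u+j, v+1})_j` is
computed from the row `(t_{u+j, v})_j` and the single value `t_{u, v+1}`, and by hyperbolicity
every row arises in this way from some row below it. Hence `D̄F = F` lets us push `F` down one
level at the price of moving one entry of the column `t̄₁, t̄₂, …` into the row data, so a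
dependence on the first `n + 1` column entries reduces to one on the first `n`. Starting from the
`N + 1` column entries `F` depends on, `N + 1` such steps remove the column altogether.
-/

namespace DiscreteHyperbolic

variable {f : ℝ → ℝ → ℝ → ℝ} {F : ℤ → (ℕ → ℝ) → (ℕ → ℝ) → ℝ}

def IsSolution (f : ℝ → ℝ → ℝ → ℝ) (t : ℤ → ℤ → ℝ) : Prop :=
  ∀ u v : ℤ, t (u+1) (v+1) = f (t u v) (t (u+1) v) (t u (v+1))

/-- Solvability of the Goursat problem: data on the two coordinate axes extend to a solution. -/
def GoursatSolvable (f : ℝ → ℝ → ℝ → ℝ) : Prop :=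
  ∀ a b : ℤ → ℝ, a 0 = b 0 →
    ∃ t : ℤ → ℤ → ℝ, IsSolution f t ∧ (∀ u : ℤ, t u 0 = a u) ∧ ∀ v : ℤ, t 0 v = b v

def IsVInvariant (f : ℝ → ℝ → ℝ → ℝ) (F : ℤ → (ℕ → ℝ) → (ℕ → ℝ) → ℝ) : Prop :=
  ∀ t : ℤ → ℤ → ℝ, IsSolution f t → ∀ u v : ℤ,
    F (v+1) (fun j => t (u + j) (v+1)) (fun j => t u (v + 1 + (j+1)))
      = F v (fun j => t (u + j) v) (fun j => t u (v + (j+1)))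

/-- The row above the row `a` whose first entry is `c`. -/
def nextRow (f : ℝ → ℝ → ℝ → ℝ) (a : ℕ → ℝ) (c : ℝ) : ℕ → ℝ
  | 0 => c
  | j+1 => f (a j) (a (j+1)) (nextRow f a c j)

theorem IsSolution.row_succ {t : ℤ → ℤ → ℝ} (ht : IsSolution f t) (u v : ℤ) :
    (fun j : ℕ => t (u + j) (v+1)) = nextRow f (fun j : ℕ => t (u + j) v) (t u (v+1)) := by
  funext j
  induction j with
  | zero => simp [nextRow]
  | succ j ih =>
    rw [nextRow, ← ih, Nat.cast_succ, ← add_assoc, ht]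

theorem GoursatSolvable.exists_row_column (hsol : GoursatSolvable f) (v : ℤ) (a b : ℕ → ℝ) :
    ∃ t : ℤ → ℤ → ℝ, IsSolution f t ∧ (∀ j : ℕ, t j v = a j) ∧
      ∀ j : ℕ, t 0 (v + (j+1)) = b j := by
  obtain ⟨s, hs, hrow, hcol⟩ := hsol (fun u => a u.toNat)
    (fun w => if 1 ≤ w then b (w-1).toNat else a 0) (by simp)
  refine ⟨fun u w => s u (w - v), fun u w => ?_, fun j => ?_, fun j => ?_⟩
  · simpa only [add_sub_right_comm] using hs u (w - v)
  · simp [hrow]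
  · simp [hcol, add_sub_cancel_left, show (1 : ℤ) ≤ j + 1 by omega]

theorem GoursatSolvable.exists_nextRow_eq (hsol : GoursatSolvable f) (A : ℕ → ℝ) :
    ∃ a : ℕ → ℝ, nextRow f a (A 0) = A := by
  obtain ⟨t, ht, hrow, -⟩ := hsol.exists_row_column 0 A 0
  refine ⟨fun j : ℕ => t j (-1), ?_⟩
  have h := ht.row_succ 0 (-1)
  have hA0 : t 0 0 = A 0 := by simpa using hrow 0
  simp only [neg_add_cancel, zero_add, hrow, hA0] at h
  exact h.symm

theorem IsVInvariant.eq_nextRow (hF : IsVInvariant f F) (hsol : GoursatSolvable f)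
    (v : ℤ) (a : ℕ → ℝ) (c : ℝ) (B : ℕ → ℝ) :
    F v a (Stream'.cons c B) = F (v+1) (nextRow f a c) B := by
  obtain ⟨t, ht, hrow, hcol⟩ := hsol.exists_row_column v a (Stream'.cons c B)
  have h := hF t ht 0 v
  have hc : t 0 (v+1) = c := by simpa using (hcol 0).trans (Stream'.get_zero_cons c B)
  have htail : (fun j : ℕ => t 0 (v + 1 + (j+1))) = B := by
    funext j
    rw [show v + 1 + (j+1) = v + ((j+1 : ℕ) + 1) by push_cast; ring, hcol]
    rfl
  rw [ht.row_succ, htail, hc] at h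
  simp only [zero_add, hrow, hcol] at h
  exact h.symm

def DependsOnlyOnColumnPrefix (F : ℤ → (ℕ → ℝ) → (ℕ → ℝ) → ℝ) (n : ℕ) : Prop :=
  ∀ (v : ℤ) (A B B' : ℕ → ℝ), (∀ j < n, B j = B' j) → F v A B = F v A B'

theorem IsVInvariant.dependsOnlyOnColumnPrefix_of_succ (hF : IsVInvariant f F)
    (hsol : GoursatSolvable f) {n : ℕ}
    (h : DependsOnlyOnColumnPrefix F (n+1)) : DependsOnlyOnColumnPrefix F n := by
  intro v A B B' hB
  obtain ⟨a, ha⟩ := hsol.exists_nextRow_eq A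
  have hdown (B : ℕ → ℝ) : F v A B = F (v-1) a (Stream'.cons (A 0) B) := by
    rw [hF.eq_nextRow hsol, sub_add_cancel, ha]
  rw [hdown B, hdown B']
  refine h _ _ _ _ fun j hj => ?_
  cases j with
  | zero => rfl
  | succ j => exact hB j (by omega)

theorem IsVInvariant.dependsOnlyOnColumnPrefix_zero (hF : IsVInvariant f F)
    (hsol : GoursatSolvable f) {n : ℕ}
    (h : DependsOnlyOnColumnPrefix F n) : DependsOnlyOnColumnPrefix F 0 := by
  induction n with
  | zero => exact h
  | succ n ih => exact ih (hF.dependsOnlyOnColumnPrefix_of_succ hsol h)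

end DiscreteHyperbolic

open DiscreteHyperbolic

theorem stmt0
    (f : ℝ → ℝ → ℝ → ℝ)
    -- hyperbolicity: there exist solutions with arbitrary data on the two axes
    (hsol : ∀ a b : ℤ → ℝ, a 0 = b 0 →
      ∃ t : ℤ → ℤ → ℝ,
        (∀ u v : ℤ, t (u+1) (v+1) = f (t u v) (t (u+1) v) (t u (v+1))) ∧
        (∀ u : ℤ, t u 0 = a u) ∧ (∀ v : ℤ, t 0 v = b v))
    (F : ℤ → (ℕ → ℝ) → (ℕ → ℝ) → ℝ)
    -- `F` depends on only finitely many of the dynamical variables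
    (hfin : ∃ N : ℕ, ∀ (v : ℤ) (a a' b b' : ℕ → ℝ),
      (∀ j ≤ N, a j = a' j) → (∀ j ≤ N, b j = b' j) → F v a b = F v a' b')
    -- `F` is a `v`-invariant: `D̄F = F` on every solution
    (hinv : ∀ t : ℤ → ℤ → ℝ,
      (∀ u v : ℤ, t (u+1) (v+1) = f (t u v) (t (u+1) v) (t u (v+1))) →
      ∀ u v : ℤ,
        F (v+1) (fun j => t (u + j) (v+1)) (fun j => t u (v + 1 + (j+1)))
          = F v (fun j => t (u + j) v) (fun j => t u (v + (j+1)))) :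
    -- conclusion: `F` does not depend on `t̄₁, t̄₂, …`
    ∀ (v : ℤ) (a b b' : ℕ → ℝ), F v a b = F v a b' := by
  obtain ⟨N, hN⟩ := hfin
  have hprefix : DependsOnlyOnColumnPrefix F (N+1) := fun v A B B' hB =>
    hN v A A B B' (fun _ _ => rfl) fun j hj => hB j (Nat.lt_succ_of_le hj)
  intro v a b b'
  exact IsVInvariant.dependsOnlyOnColumnPrefix_zero (f := f) hinv hsol hprefix v a b b'
    fun j hj => absurd hj (Nat.not_lt_zero j)
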